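/- The collection I₀ of avoidable subsets of ω₁ is a normal ideal on ω₁: it is closed under subsets and under diagonal unions, i.e., if S_ξ ∈ I₀ for every ξ < ω₁ then ∇_ξ S_ξ = {α < ω₁ : ∃ξ < α, α ∈ S_ξ} ∈ I₀. -/

import Mathlib

open Set

/-- ω₁, the first uncountable ordinal. -/
noncomputable def omegaOne : Ordinal := (Cardinal.aleph 1).ord

/-- ω₂, the second uncountable ordinal. -/
noncomputable def omegaTwo : Ordinal := (Cardinal.aleph 2).ord

/-- The set of countable ordinals, i.e. ω₁ viewed as a set of ordinals. -/
def omegaOneSet : Set Ordinal := {o | o < omegaOne}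

/-- `A ⊆* B` iff `A \ B` is finite. -/
def AlmostSubset (A B : Set Ordinal) : Prop := (A \ B).Finite

/-- `A =* B` iff `A ⊆* B` and `B ⊆* A`. -/
def AlmostEq (A B : Set Ordinal) : Prop := AlmostSubset A B ∧ AlmostSubset B A

/-- A club subset of ω₁: a set of countable ordinals, unbounded in ω₁ and
closed (every nonzero δ < ω₁ which is a limit of members is a member). -/
def IsClubOmegaOne (C : Set Ordinal) : Prop :=
  C ⊆ omegaOneSet ∧
  (∀ a < omegaOne, ∃ b ∈ C, a < b) ∧
  (∀ δ, δ ≠ 0 → δ < omegaOne → (∀ a < δ, ∃ b ∈ C, a < b ∧ b < δ) → δ ∈ C)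

/-- A stationary subset of ω₁: one meeting every club. -/
def Stationary (S : Set Ordinal) : Prop := ∀ C, IsClubOmegaOne C → (S ∩ C).Nonempty

/-- A ladder system: for each δ in the domain (a set of countable limit ordinals),
a strictly increasing ω-sequence cofinal in δ. -/
structure Ladder where
  dom : Set Ordinal
  toFun : Ordinal → ℕ → Ordinal
  dom_lt : ∀ δ ∈ dom, δ < omegaOne
  mono : ∀ δ ∈ dom, StrictMono (toFun δ)
  lt : ∀ δ ∈ dom, ∀ n, toFun δ n < δ
  cofinal : ∀ δ ∈ dom, ∀ a < δ, ∃ n, a < toFun δ n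

/-- `[η_δ]`, the range of the ladder at δ. -/
def Ladder.lad (η : Ladder) (δ : Ordinal) : Set Ordinal := Set.range (η.toFun δ)

/-- The restriction `η̄↾A`, with domain `dom(η̄) ∩ A`. -/
def Ladder.restrict (η : Ladder) (A : Set Ordinal) : Ladder where
  dom := η.dom ∩ A
  toFun := η.toFun
  dom_lt := fun δ h => η.dom_lt δ h.1
  mono := fun δ h => η.mono δ h.1
  lt := fun δ h => η.lt δ h.1
  cofinal := fun δ h => η.cofinal δ h.1

/-- η̄ is club-guessing iff every club C has some δ ∈ dom(η̄) with `[η_δ] ⊆* C`. -/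
def ClubGuessing (η : Ladder) : Prop :=
  ∀ C, IsClubOmegaOne C → ∃ δ ∈ η.dom, AlmostSubset (η.lad δ) C

/-- η̄ is strongly club-guessing iff for every club C there is a club D with
`[η_δ] ⊆* C` for all δ ∈ D ∩ dom(η̄). -/
def StronglyGuessing (η : Ladder) : Prop :=
  ∀ C, IsClubOmegaOne C → ∃ D, IsClubOmegaOne D ∧ ∀ δ ∈ D ∩ η.dom, AlmostSubset (η.lad δ) C

/-- A club C avoids η̄ iff `[η_δ] ∩ C` is finite for every δ ∈ dom(η̄) outside
some non-stationary set. -/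
def Avoids (C : Set Ordinal) (η : Ladder) : Prop :=
  IsClubOmegaOne C ∧ ∃ N : Set Ordinal, ¬ Stationary N ∧
    ∀ δ ∈ η.dom, δ ∉ N → (η.lad δ ∩ C).Finite

/-- η̄ is avoidable iff some club avoids it. -/
def Avoidable (η : Ladder) : Prop := ∃ C, Avoids C η

/-- A set S ⊆ ω₁ is avoidable iff every ladder system over S is avoidable. -/
def AvoidableSet (S : Set Ordinal) : Prop := ∀ η : Ladder, η.dom ⊆ S → Avoidable η

/-- Two ladders are almost disjoint iff for some club C, `[η_δ] ∩ [μ_δ]` is finite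
for every δ ∈ C ∩ dom(η̄) ∩ dom(μ̄). -/
def AlmostDisjoint (η μ : Ladder) : Prop :=
  ∃ C, IsClubOmegaOne C ∧ ∀ δ ∈ C ∩ (η.dom ∩ μ.dom), (η.lad δ ∩ μ.lad δ).Finite

/-- `η̄ ⊴ μ̄` : η̄ is a subladder of μ̄. -/
def Subladder (η μ : Ladder) : Prop :=
  ∃ C, IsClubOmegaOne C ∧ C ∩ η.dom ⊆ μ.dom ∧
    ∀ δ ∈ C ∩ η.dom, AlmostSubset (η.lad δ) (μ.lad δ)

/-- η̄ is maximal for X iff dom(η̄) ⊆ X, η̄ is strongly club-guessing, and every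
ladder system over X almost disjoint from η̄ is avoidable. -/
def MaximalForLadder (η : Ladder) (X : Set Ordinal) : Prop :=
  η.dom ⊆ X ∧ StronglyGuessing η ∧
    ∀ μ : Ladder, μ.dom ⊆ X → AlmostDisjoint μ η → Avoidable μ

/-- The diagonal union `∇_ξ A_ξ = {α < ω₁ : ∃ ξ < α, α ∈ A_ξ}`. -/
def diagUnion (A : Ordinal → Set Ordinal) : Set Ordinal :=
  {α | α < omegaOne ∧ ∃ ξ < α, α ∈ A ξ}

/-- H is S̄-small iff the set of i < ω₂ with H ∩ S_i stationary has size ≤ ℵ₁. -/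
def SSmall (S : Ordinal → Set Ordinal) (H : Set Ordinal) : Prop :=
  Cardinal.mk {i : Ordinal // i < omegaTwo ∧ Stationary (H ∩ S i)} ≤
    Cardinal.lift.{1,0} (Cardinal.aleph 1 : Cardinal.{0})

/-- Conditions A1–A5 for (S̄, η̄), with χ the family of maximal ladders from A3. -/
def CondA (S : Ordinal → Set Ordinal) (η : Ladder) (χ : Ordinal → Ladder) : Prop :=
  (∀ i < omegaTwo, S i ⊆ omegaOneSet ∧ Stationary (S i)) ∧
  (∀ i < omegaTwo, ∀ j < omegaTwo, i ≠ j → ¬ Stationary (S i ∩ S j)) ∧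
  -- A1
  (∀ i < omegaTwo, S i ⊆ η.dom) ∧
  -- A2
  (∀ μ : Ladder, AlmostDisjoint μ η → Avoidable μ) ∧
  -- A3
  (∀ i < omegaTwo, (χ i).dom = S i ∧ MaximalForLadder (χ i) (S i)) ∧
  -- A4
  (∀ X : Set Ordinal, X ⊆ omegaOneSet →
      (∀ i < omegaTwo, ¬ Stationary (X ∩ S i)) → AvoidableSet X) ∧
  -- A5
  (∀ X : Set Ordinal, X ⊆ omegaOneSet → ¬ SSmall S X →
      ∀ ρ : Ladder, ρ.dom = X → Subladder ρ η →
        ∃ i, i < omegaTwo ∧ S i ⊆ X ∧ Subladder (χ i) ρ)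

-- helpers
universe u

lemma omegaOne_limit : Order.IsSuccLimit omegaOne :=
  Cardinal.isSuccLimit_ord (Cardinal.aleph0_le_aleph 1)

lemma omegaOne_pos : (0:Ordinal) < omegaOne := omegaOne_limit.pos

lemma sup_nat_lt {f : ℕ → Ordinal.{u}} (h : ∀ n, f n < omegaOne) : (⨆ n, f n) < omegaOne := by
  apply Ordinal.iSup_lt_ord_lift _ h
  rw [show omegaOne.{u}.cof = Cardinal.aleph 1 from Cardinal.isRegular_aleph_one.cof_eq]
  rw [Cardinal.mk_nat, Cardinal.lift_aleph0]
  exact Cardinal.aleph0_lt_aleph_one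

lemma isClub_omegaOneSet : IsClubOmegaOne omegaOneSet := by
  refine ⟨subset_rfl, fun a ha => ⟨Order.succ a, omegaOne_limit.succ_lt ha, Order.lt_succ a⟩,
    fun δ _ hδ _ => hδ⟩

lemma exists_enum : ∀ α : Ordinal.{u}, ∃ f : ℕ → Ordinal.{u},
    (∀ n, f n < omegaOne) ∧ (α < omegaOne → ∀ ξ < α, ∃ n, f n = ξ) := by
  intro α
  by_cases hα : α < omegaOne ∧ α ≠ 0
  · obtain ⟨hα1, hα2⟩ := hα
    have h1 : (Set.Iio α).Countable := by
      rw [Cardinal.countable_iff_lt_aleph_one]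
      calc Cardinal.mk (Set.Iio α) = Cardinal.lift.{u+1} α.card := Ordinal.mk_Iio_ordinal α
        _ < Cardinal.lift.{u+1} (Cardinal.aleph 1) :=
            Cardinal.lift_lt.mpr (Cardinal.lt_ord.mp hα1)
        _ = Cardinal.aleph 1 := by rw [Cardinal.lift_aleph, Ordinal.lift_one]
    have : Countable (Set.Iio α) := h1.to_subtype
    have hne : Nonempty (Set.Iio α) := ⟨⟨0, pos_iff_ne_zero.mpr hα2⟩⟩
    obtain ⟨f', hf'⟩ := exists_surjective_nat (Set.Iio α)
    refine ⟨fun n => (f' n : Ordinal), fun n => (f' n).2.trans hα1, fun _ ξ hξ => ?_⟩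
    obtain ⟨n, hn⟩ := hf' ⟨ξ, hξ⟩
    exact ⟨n, by simp only []; rw [hn]⟩
  · push_neg at hα
    refine ⟨fun _ => 0, fun _ => omegaOne_pos, fun h1 ξ hξ => ?_⟩
    rw [hα h1] at hξ
    exact absurd hξ (not_lt_zero' (a := ξ))

lemma diag_club (E : Ordinal.{u} → ℕ → Set Ordinal.{u}) (hE : ∀ ξ n, IsClubOmegaOne (E ξ n)) :
    IsClubOmegaOne {α | α < omegaOne ∧ ∀ ξ < α, ∀ n, α ∈ E ξ n} := by
  have hp : ∀ ξ : Ordinal, ∀ n : ℕ, ∀ a : Ordinal,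
      ∃ c, c ∈ E ξ n ∧ c < omegaOne ∧ (a < omegaOne → a < c) := by
    intro ξ n a
    by_cases ha : a < omegaOne
    · obtain ⟨c, hc, hac⟩ := (hE ξ n).2.1 a ha
      exact ⟨c, hc, (hE ξ n).1 hc, fun _ => hac⟩
    · obtain ⟨c, hc, _⟩ := (hE ξ n).2.1 0 omegaOne_pos
      exact ⟨c, hc, (hE ξ n).1 hc, fun h => absurd h ha⟩
  choose p hp1 hp2 hp3 using hp
  choose e he1 he2 using exists_enum
  set g : Ordinal → Ordinal := fun α =>
    max ((⨆ k : ℕ, p (e α (Nat.unpair k).1) (Nat.unpair k).2 α) + 1) (α + 1) with hgdef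
  have hsuclt : ∀ x < omegaOne, x + 1 < omegaOne := by
    intro x hx
    rw [Ordinal.add_one_eq_succ]
    exact omegaOne_limit.succ_lt hx
  have hgltω : ∀ α < omegaOne, g α < omegaOne := by
    intro α hα
    apply max_lt
    · exact hsuclt _ (sup_nat_lt fun k => hp2 _ _ _)
    · exact hsuclt _ hα
  have hαlt1 : ∀ α : Ordinal, α < α + 1 := by
    intro α; rw [Ordinal.add_one_eq_succ]; exact Order.lt_succ α
  have hgt : ∀ α, α < g α := fun α => lt_of_lt_of_le (hαlt1 α) (le_max_right _ _)
  have hstep : ∀ α < omegaOne, ∀ ξ < α, ∀ n : ℕ, ∃ c, c ∈ E ξ n ∧ α < c ∧ c < g α := by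
    intro α hα ξ hξ n
    obtain ⟨k, hk⟩ := he2 α hα ξ hξ
    refine ⟨p ξ n α, hp1 ξ n α, hp3 ξ n α hα, ?_⟩
    have h1 : p ξ n α ≤ ⨆ k : ℕ, p (e α (Nat.unpair k).1) (Nat.unpair k).2 α := by
      have := Ordinal.le_iSup
        (fun k : ℕ => p (e α (Nat.unpair k).1) (Nat.unpair k).2 α) (Nat.pair k n)
      simpa [Nat.unpair_pair, hk] using this
    calc p ξ n α < (⨆ k : ℕ, p (e α (Nat.unpair k).1) (Nat.unpair k).2 α) + 1 :=
          lt_of_le_of_lt h1 (hαlt1 _)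
      _ ≤ g α := le_max_left _ _
  refine ⟨fun x hx => hx.1, ?_, ?_⟩
  · -- unbounded
    intro a ha
    set A : ℕ → Ordinal := fun n => g^[n] a with hA
    have hAsucc : ∀ n, A (n + 1) = g (A n) := fun n => Function.iterate_succ_apply' g n a
    have hAlt : ∀ n, A n < omegaOne := by
      intro n; induction n with
      | zero => exact ha
      | succ m ih => rw [hAsucc]; exact hgltω _ ih
    have hAmono : StrictMono A := by
      apply strictMono_nat_of_lt_succ
      intro n; rw [hAsucc]; exact hgt _
    set b : Ordinal := ⨆ n, A n with hb
    have hbω : b < omegaOne := sup_nat_lt hAlt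
    have hab : a < b := lt_of_lt_of_le (hAmono Nat.zero_lt_one) (Ordinal.le_iSup A 1)
    have hlt_b : ∀ x, x < b → ∃ m, x < A m := by
      intro x hx
      rw [hb, Ordinal.lt_iSup_iff] at hx
      exact hx
    refine ⟨b, ⟨hbω, ?_⟩, hab⟩
    intro ξ hξ n
    have hb0 : b ≠ 0 := pos_iff_ne_zero.mp (lt_of_le_of_lt (zero_le (a := a)) hab)
    apply (hE ξ n).2.2 b hb0 hbω
    intro x hx
    obtain ⟨m1, hm1⟩ := hlt_b x hx
    obtain ⟨m2, hm2⟩ := hlt_b ξ hξ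
    set M := max m1 m2 with hM
    have hxM : x < A M := lt_of_lt_of_le hm1 (hAmono.monotone (le_max_left _ _))
    have hξM : ξ < A M := lt_of_lt_of_le hm2 (hAmono.monotone (le_max_right _ _))
    obtain ⟨c, hc, h1, h2⟩ := hstep (A M) (hAlt M) ξ hξM n
    refine ⟨c, hc, lt_trans hxM h1, ?_⟩
    calc c < g (A M) := h2
      _ = A (M + 1) := (hAsucc M).symm
      _ ≤ b := Ordinal.le_iSup A (M + 1)
  · -- closed
    intro δ hδ0 hδω h
    refine ⟨hδω, ?_⟩
    intro ξ hξ n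
    apply (hE ξ n).2.2 δ hδ0 hδω
    intro x hx
    obtain ⟨b, hbmem, hb1, hb2⟩ := h (max x ξ) (max_lt hx hξ)
    exact ⟨b, hbmem.2 ξ (lt_of_le_of_lt (le_max_right x ξ) hb1) n,
      lt_of_le_of_lt (le_max_left x ξ) hb1, hb2⟩

/-- The collection I₀ of avoidable subsets of ω₁ is a normal ideal:
closed under subsets and under diagonal unions. -/
theorem stmt1 :
    (∀ S : Set Ordinal, S ⊆ omegaOneSet → ∀ S' ⊆ S, AvoidableSet S → AvoidableSet S') ∧
    (∀ S : Ordinal → Set Ordinal, (∀ ξ < omegaOne, S ξ ⊆ omegaOneSet) →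
        (∀ ξ < omegaOne, AvoidableSet (S ξ)) → AvoidableSet (diagUnion S)) := by
  constructor
  · exact fun S _ S' hsub hA η hη => hA η (hη.trans hsub)
  · intro S _ hSav η hηdom
    have key : ∀ ξ : Ordinal, ∃ C M : Set Ordinal, IsClubOmegaOne C ∧ IsClubOmegaOne M ∧
        (ξ < omegaOne → ∀ δ, δ ∈ η.dom → δ ∈ S ξ → δ ∈ M → (η.lad δ ∩ C).Finite) := by
      intro ξ
      by_cases hξ : ξ < omegaOne
      · obtain ⟨C, hC, N, hN, hfin⟩ := hSav ξ hξ (η.restrict (S ξ)) Set.inter_subset_right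
        rw [Stationary] at hN
        push_neg at hN
        obtain ⟨M, hM, hNM⟩ := hN
        refine ⟨C, M, hC, hM, fun _ δ hδ1 hδ2 hδ3 => ?_⟩
        have hδN : δ ∉ N := fun hmem =>
          Set.eq_empty_iff_forall_notMem.mp hNM δ ⟨hmem, hδ3⟩
        exact hfin δ ⟨hδ1, hδ2⟩ hδN
      · exact ⟨omegaOneSet, omegaOneSet, isClub_omegaOneSet, isClub_omegaOneSet,
          fun h => absurd h hξ⟩
    choose C M hC hM hkey using key
    set Cs : Set Ordinal :=
      {α | α < omegaOne ∧ ∀ ξ < α, ∀ n : ℕ, α ∈ (if n = 0 then C ξ else M ξ)} with hCsdef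
    have hclub : IsClubOmegaOne Cs := by
      apply diag_club
      intro ξ n
      by_cases h : n = 0 <;> simp [h, hC ξ, hM ξ]
    refine ⟨Cs, hclub, Csᶜ, ?_, ?_⟩
    · intro hst
      obtain ⟨x, hx1, hx2⟩ := hst Cs hclub
      exact hx1 hx2
    · intro δ hδ hδ'
      have hδC : δ ∈ Cs := not_not.mp hδ'
      obtain ⟨hδω, ξ, hξδ, hξS⟩ := hηdom hδ
      have hξω : ξ < omegaOne := hξδ.trans hδω
      have hδM : δ ∈ M ξ := by
        have := hδC.2 ξ hξδ 1
        simpa using this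
      have hfin := hkey ξ hξω δ hδ hξS hδM
      obtain ⟨n₀, hn₀⟩ := η.cofinal δ hδ ξ hξδ
      have hsub : η.lad δ ∩ Cs ⊆ (η.lad δ ∩ C ξ) ∪ (η.toFun δ '' Set.Iio n₀) := by
        rintro x ⟨⟨k, rfl⟩, hxC⟩
        by_cases hxξ : ξ < η.toFun δ k
        · left
          refine ⟨⟨k, rfl⟩, ?_⟩
          have := hxC.2 ξ hxξ 0
          simpa using this
        · right
          refine ⟨k, ?_, rfl⟩
          have hlt : η.toFun δ k < η.toFun δ n₀ := lt_of_le_of_lt (not_lt.mp hxξ) hn₀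
          exact (η.mono δ hδ).lt_iff_lt.mp hlt
      exact Set.Finite.subset (hfin.union ((Set.finite_Iio n₀).image _)) hsub
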